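/- The tail energy of the soliton is nonnegative: for every λ ≥ 0, (1/2)·∫_λ^∞ φ'(x)² dx ≥ (1/6)·∫_λ^∞ φ(x)⁶ dx. -/

import Mathlib

/-!
With `y = 2x/√3` one has `φ⁶ = cosh⁻³ y` and `φ'² = sinh² y / (3 cosh³ y)`, so the energy density
`φ'²/2 - φ⁶/6 = (sinh² y - 1) / (6 cosh³ y)` has the explicit antiderivative
`-(√3/12) sinh y / cosh² y`. It tends to `0` at `+∞` and is `≤ 0` for `x ≥ 0`, so the tail energy
`(√3/12) sinh y / cosh² y` at `y = 2λ/√3` is nonnegative. Both integrands are bounded by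
`1 / cosh y ≤ 2 e^{-y}`, which makes the integrals finite.
-/

open Real MeasureTheory Set Filter Topology

/-- The soliton `φ(x) = cosh(2x/√3)^(-1/2)`. -/
noncomputable def soliton (x : ℝ) : ℝ := (Real.cosh (2 * x / Real.sqrt 3)) ^ (-(1/2) : ℝ)


namespace Real

lemma inv_cosh_le_two_mul_exp_neg (y : ℝ) : (cosh y)⁻¹ ≤ 2 * exp (-y) := by
  have h : exp y / 2 ≤ cosh y := by
    rw [cosh_eq]; linarith [exp_pos (-y)]
  calc (cosh y)⁻¹ ≤ (exp y / 2)⁻¹ := inv_anti₀ (by positivity) h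
    _ = 2 * exp (-y) := by rw [inv_div, exp_neg]; ring

lemma tendsto_inv_cosh_atTop : Tendsto (fun y => (cosh y)⁻¹) atTop (𝓝 0) := by
  have h : Tendsto (fun y => 2 * exp (-y)) atTop (𝓝 0) := by
    simpa using tendsto_exp_neg_atTop_nhds_zero.const_mul 2
  exact squeeze_zero (fun y => by positivity) inv_cosh_le_two_mul_exp_neg h

lemma integrableOn_Ioi_inv_cosh_mul {c : ℝ} (hc : 0 < c) (l : ℝ) :
    IntegrableOn (fun x => (cosh (c * x))⁻¹) (Ioi l) := by
  refine ((exp_neg_integrableOn_Ioi l hc).const_mul 2).mono'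
    (by fun_prop) (ae_of_all _ fun x => ?_)
  rw [norm_inv, norm_of_nonneg (cosh_pos _).le, neg_mul]
  exact inv_cosh_le_two_mul_exp_neg _

lemma abs_sinh_le_cosh (y : ℝ) : |sinh y| ≤ cosh y :=
  abs_le.mpr ⟨by linarith [sinh_lt_cosh (-y), sinh_neg y, cosh_neg y], (sinh_lt_cosh y).le⟩

lemma abs_sinh_div_cosh_sq_le (y : ℝ) : |sinh y / cosh y ^ 2| ≤ (cosh y)⁻¹ := by
  have hc := cosh_pos y
  rw [abs_div, abs_of_pos (pow_pos hc 2), div_le_iff₀ (pow_pos hc 2), pow_two,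
    inv_mul_cancel_left₀ hc.ne']
  exact abs_sinh_le_cosh y

lemma tendsto_sinh_div_cosh_sq_atTop :
    Tendsto (fun y => sinh y / cosh y ^ 2) atTop (𝓝 0) :=
  squeeze_zero_norm abs_sinh_div_cosh_sq_le tendsto_inv_cosh_atTop

lemma hasDerivAt_sinh_div_cosh_sq (y : ℝ) :
    HasDerivAt (fun y => sinh y / cosh y ^ 2) ((1 - sinh y ^ 2) / cosh y ^ 3) y := by
  have hc := cosh_pos y
  have hc2 : HasDerivAt (fun y => cosh y ^ 2) (2 * cosh y * sinh y) y := by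
    simpa using (hasDerivAt_cosh y).fun_pow 2
  refine ((hasDerivAt_sinh y).div hc2 (pow_pos hc 2).ne').congr_deriv ?_
  field_simp
  linear_combination cosh_sq y

lemma hasDerivAt_cosh_rpow_neg_half (y : ℝ) :
    HasDerivAt (fun y => cosh y ^ (-(1/2) : ℝ)) (-(1/2) * cosh y ^ (-(3/2) : ℝ) * sinh y) y := by
  refine ((hasDerivAt_cosh y).rpow_const (Or.inl (cosh_pos y).ne')).congr_deriv ?_
  norm_num
  ring

end Real

lemma hasDerivAt_two_mul_div_sqrt_three (x : ℝ) :
    HasDerivAt (fun x : ℝ => 2 * x / √3) (2 / √3) x := by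
  simpa using ((hasDerivAt_id x).const_mul 2).div_const (√3)

lemma soliton_pow_six (x : ℝ) : soliton x ^ 6 = (cosh (2 * x / √3) ^ 3)⁻¹ := by
  rw [soliton, ← rpow_natCast, ← rpow_mul (cosh_pos _).le]
  norm_num

lemma hasDerivAt_soliton (x : ℝ) :
    HasDerivAt soliton
      (-(1/2) * cosh (2 * x / √3) ^ (-(3/2) : ℝ) * sinh (2 * x / √3) * (2 / √3)) x :=
  (hasDerivAt_cosh_rpow_neg_half _).comp x (hasDerivAt_two_mul_div_sqrt_three x)

lemma deriv_soliton_sq (x : ℝ) :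
    deriv soliton x ^ 2 = sinh (2 * x / √3) ^ 2 / (3 * cosh (2 * x / √3) ^ 3) := by
  have hc := cosh_pos (2 * x / √3)
  have h32 : (cosh (2 * x / √3) ^ (-(3/2) : ℝ)) ^ 2 = (cosh (2 * x / √3) ^ 3)⁻¹ := by
    rw [← rpow_natCast, ← rpow_mul hc.le]
    norm_num
  rw [(hasDerivAt_soliton x).deriv, mul_pow, mul_pow, mul_pow, h32, div_pow,
    sq_sqrt zero_le_three]
  field_simp

lemma continuous_soliton : Continuous soliton :=
  continuous_iff_continuousAt.2 fun x => (hasDerivAt_soliton x).continuousAt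

lemma integrableOn_Ioi_soliton_pow_six (l : ℝ) :
    IntegrableOn (fun x => soliton x ^ 6) (Ioi l) := by
  refine (integrableOn_Ioi_inv_cosh_mul (by positivity : (0 : ℝ) < 2 / √3) l).mono'
    (continuous_soliton.pow 6).aestronglyMeasurable (ae_of_all _ fun x => ?_)
  rw [norm_of_nonneg (by positivity), soliton_pow_six, ← mul_div_right_comm]
  exact inv_anti₀ (cosh_pos _) (le_self_pow₀ (one_le_cosh _) three_ne_zero)

lemma integrableOn_Ioi_deriv_soliton_sq (l : ℝ) :
    IntegrableOn (fun x => deriv soliton x ^ 2) (Ioi l) := by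
  refine (integrableOn_Ioi_inv_cosh_mul (by positivity : (0 : ℝ) < 2 / √3) l).mono'
    ((measurable_deriv soliton).pow_const 2).aestronglyMeasurable (ae_of_all _ fun x => ?_)
  have hc := cosh_pos (2 * x / √3)
  rw [norm_of_nonneg (by positivity), deriv_soliton_sq, ← mul_div_right_comm,
    div_le_iff₀ (by positivity), inv_mul_eq_div, le_div_iff₀ hc]
  nlinarith [cosh_sq (2 * x / √3), one_le_cosh (2 * x / √3)]

noncomputable def solitonEnergyAntideriv (x : ℝ) : ℝ :=
  -(√3 / 12) * (sinh (2 * x / √3) / cosh (2 * x / √3) ^ 2)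

lemma hasDerivAt_solitonEnergyAntideriv (x : ℝ) :
    HasDerivAt solitonEnergyAntideriv
      ((1/2) * deriv soliton x ^ 2 - (1/6) * soliton x ^ 6) x := by
  have hd := ((hasDerivAt_sinh_div_cosh_sq _).comp x
    (hasDerivAt_two_mul_div_sqrt_three x)).const_mul (-(√3 / 12))
  refine hd.congr_deriv ?_
  have hc := cosh_pos (2 * x / √3)
  have hs : √3 ≠ 0 := by positivity
  rw [deriv_soliton_sq, soliton_pow_six]
  field_simp
  ring

lemma tendsto_solitonEnergyAntideriv_atTop :
    Tendsto solitonEnergyAntideriv atTop (𝓝 0) := by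
  have h : Tendsto (fun x : ℝ => 2 * x / √3) atTop atTop :=
    (tendsto_id.const_mul_atTop two_pos).atTop_div_const (by positivity)
  rw [← mul_zero (-(√3 / 12))]
  exact (tendsto_sinh_div_cosh_sq_atTop.comp h).const_mul _

lemma solitonEnergyAntideriv_nonpos {x : ℝ} (hx : 0 ≤ x) : solitonEnergyAntideriv x ≤ 0 := by
  have hs : 0 ≤ sinh (2 * x / √3) := sinh_nonneg_iff.2 (by positivity)
  have hq : 0 ≤ sinh (2 * x / √3) / cosh (2 * x / √3) ^ 2 := by positivity
  unfold solitonEnergyAntideriv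
  nlinarith [sqrt_nonneg 3]

theorem stmt_14 (l : ℝ) (hl : 0 ≤ l) :
    (1/6) * ∫ x in Set.Ioi l, (soliton x) ^ 6
      ≤ (1/2) * ∫ x in Set.Ioi l, (deriv soliton x) ^ 2 := by
  have h6 := (integrableOn_Ioi_soliton_pow_six l).const_mul (1/6)
  have h2 := (integrableOn_Ioi_deriv_soliton_sq l).const_mul (1/2)
  have hE := integral_Ioi_of_hasDerivAt_of_tendsto' (fun x _ => hasDerivAt_solitonEnergyAntideriv x)
    (h2.sub h6) tendsto_solitonEnergyAntideriv_atTop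
  rw [integral_sub h2 h6, integral_const_mul, integral_const_mul] at hE
  linarith [solitonEnergyAntideriv_nonpos hl]
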